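/- arXiv:1412.2343 — 2 statements merged into one kernel-verified Lean document; each statement's English description precedes it below -/
import Mathlib

section
/- There exists a constant c₁ > 0 depending only on L such that for all β ∈ (0, μ₁) and all x ∈ (0, L), ∫₀^∞ e^{βt} p_D(t,x,x) dt ≤ c₁·[1/√β + 1/(μ₁−β)]. -/
open MeasureTheory Real

/-- The Dirichlet heat kernel on `(0,L)`. -/
noncomputable def dirichletKernel (L t x y : ℝ) : ℝ :=
  (2 / L) * ∑' n : ℕ,
    Real.exp (-((n:ℝ)+1)^2 * Real.pi^2 * t / (2*L^2)) *
      Real.sin (((n:ℝ)+1) * Real.pi * x / L) * Real.sin (((n:ℝ)+1) * Real.pi * y / L)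

/-!
Bounding `sin² ≤ 1` gives `e^{βt} p_D(t,x,x) ≤ (2/L) ∑ₙ e^{-(μₙ - β)t}`, and integrating termwise
yields `(2/L) ∑ₙ (μₙ - β)⁻¹`. Since `μₙ = n² μ₁` and `0 ≤ β`, we have `μₙ - β ≥ n² (μ₁ - β)`, so by
the Basel sum the integral is at most `(2/L)(π²/6)/(μ₁ - β)`, which is already dominated by the
right-hand side.
-/

lemma ENNReal.ofReal_tsum_le_tsum_ofReal {ι : Type*} {f : ι → ℝ} (hf : ∀ i, 0 ≤ f i) :
    ENNReal.ofReal (∑' i, f i) ≤ ∑' i, ENNReal.ofReal (f i) := by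
  by_cases hs : Summable f
  · exact (ENNReal.ofReal_tsum_of_nonneg hf hs).le
  · simp [tsum_eq_zero_of_not_summable hs]

lemma ENNReal.tsum_ofReal_inv_succ_sq :
    ∑' n : ℕ, ENNReal.ofReal (((n:ℝ) + 1) ^ 2)⁻¹ = ENNReal.ofReal (π ^ 2 / 6) := by
  have h : HasSum (fun n : ℕ => (((n:ℝ) + 1) ^ 2)⁻¹) (π ^ 2 / 6) := by
    simpa using (hasSum_nat_add_iff' 1).mpr hasSum_zeta_two
  rw [← ENNReal.ofReal_tsum_of_nonneg (fun n => by positivity) h.summable, h.tsum_eq]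

lemma lintegral_ofReal_exp_neg_mul_Ioi_zero {c : ℝ} (hc : 0 < c) :
    ∫⁻ t in Set.Ioi 0, ENNReal.ofReal (exp (-c * t)) = ENNReal.ofReal c⁻¹ := by
  rw [← ofReal_integral_eq_lintegral_ofReal (integrableOn_exp_mul_Ioi (neg_lt_zero.2 hc) 0)
    (Filter.Eventually.of_forall fun t => (exp_pos _).le),
    integral_exp_mul_Ioi (neg_lt_zero.2 hc) 0]
  simp

/-- `dirichletEigenvalue L n` is `μ_{n+1}`: indices start at `0`, as in the sum defining
`dirichletKernel`. -/
noncomputable def dirichletEigenvalue (L : ℝ) (n : ℕ) : ℝ :=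
  ((n:ℝ) + 1) ^ 2 * π ^ 2 / (2 * L ^ 2)

lemma dirichletEigenvalue_eq (L : ℝ) (n : ℕ) :
    dirichletEigenvalue L n = ((n:ℝ) + 1) ^ 2 * dirichletEigenvalue L 0 := by
  simp only [dirichletEigenvalue]
  ring

lemma dirichletEigenvalue_zero_le (L : ℝ) (n : ℕ) :
    dirichletEigenvalue L 0 ≤ dirichletEigenvalue L n := by
  have hn : (1:ℝ) ≤ ((n:ℝ) + 1) ^ 2 := one_le_pow₀ (le_add_of_nonneg_left n.cast_nonneg)
  rw [dirichletEigenvalue_eq L n]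
  exact le_mul_of_one_le_left (by simp only [dirichletEigenvalue]; positivity) hn

lemma sq_mul_dirichletEigenvalue_zero_sub_le {L β : ℝ} (hβ : 0 ≤ β) (n : ℕ) :
    ((n:ℝ) + 1) ^ 2 * (dirichletEigenvalue L 0 - β) ≤ dirichletEigenvalue L n - β := by
  have hn : (1:ℝ) ≤ ((n:ℝ) + 1) ^ 2 := one_le_pow₀ (le_add_of_nonneg_left n.cast_nonneg)
  rw [dirichletEigenvalue_eq L n]
  nlinarith

lemma exp_mul_dirichletKernel_diag (L t β x : ℝ) :
    exp (β * t) * dirichletKernel L t x x =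
      2 / L * ∑' n : ℕ, exp (-(dirichletEigenvalue L n - β) * t) *
        sin (((n:ℝ) + 1) * π * x / L) ^ 2 := by
  rw [dirichletKernel, mul_left_comm, ← tsum_mul_left]
  congr 1
  refine tsum_congr fun n => ?_
  rw [mul_assoc, ← sq, ← mul_assoc, ← exp_add, dirichletEigenvalue]
  congr 2
  ring

lemma ofReal_exp_mul_dirichletKernel_diag_le {L : ℝ} (hL : 0 < L) (t β x : ℝ) :
    ENNReal.ofReal (exp (β * t) * dirichletKernel L t x x) ≤
      ENNReal.ofReal (2 / L) *
        ∑' n : ℕ, ENNReal.ofReal (exp (-(dirichletEigenvalue L n - β) * t)) := by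
  rw [exp_mul_dirichletKernel_diag, ENNReal.ofReal_mul (by positivity)]
  gcongr
  refine (ENNReal.ofReal_tsum_le_tsum_ofReal fun n => by positivity).trans ?_
  gcongr with n
  exact mul_le_of_le_one_right (exp_pos _).le (sin_sq_le_one _)

lemma lintegral_exp_mul_dirichletKernel_diag_le {L β : ℝ} (hL : 0 < L)
    (hβ : β < dirichletEigenvalue L 0) (x : ℝ) :
    ∫⁻ t in Set.Ioi 0, ENNReal.ofReal (exp (β * t) * dirichletKernel L t x x) ≤
      ENNReal.ofReal (2 / L) * ∑' n : ℕ, ENNReal.ofReal (dirichletEigenvalue L n - β)⁻¹ := by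
  have hgap (n : ℕ) : 0 < dirichletEigenvalue L n - β :=
    sub_pos.2 (hβ.trans_le (dirichletEigenvalue_zero_le L n))
  calc ∫⁻ t in Set.Ioi 0, ENNReal.ofReal (exp (β * t) * dirichletKernel L t x x)
      ≤ ∫⁻ t in Set.Ioi 0, ENNReal.ofReal (2 / L) *
          ∑' n : ℕ, ENNReal.ofReal (exp (-(dirichletEigenvalue L n - β) * t)) :=
        lintegral_mono fun t => ofReal_exp_mul_dirichletKernel_diag_le hL t β x
    _ = ENNReal.ofReal (2 / L) * ∑' n : ℕ, ENNReal.ofReal (dirichletEigenvalue L n - β)⁻¹ := by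
        rw [lintegral_const_mul' _ _ ENNReal.ofReal_ne_top, lintegral_tsum fun n => by fun_prop]
        simp_rw [lintegral_ofReal_exp_neg_mul_Ioi_zero (hgap _)]

lemma tsum_ofReal_inv_dirichletEigenvalue_sub_le {L β : ℝ} (hβ0 : 0 ≤ β)
    (hβ : β < dirichletEigenvalue L 0) :
    ∑' n : ℕ, ENNReal.ofReal (dirichletEigenvalue L n - β)⁻¹ ≤
      ENNReal.ofReal ((dirichletEigenvalue L 0 - β)⁻¹ * (π ^ 2 / 6)) := by
  calc ∑' n : ℕ, ENNReal.ofReal (dirichletEigenvalue L n - β)⁻¹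
      ≤ ∑' n : ℕ, ENNReal.ofReal (dirichletEigenvalue L 0 - β)⁻¹ *
          ENNReal.ofReal (((n:ℝ) + 1) ^ 2)⁻¹ := by
        gcongr with n
        rw [← ENNReal.ofReal_mul (by positivity), ← mul_inv]
        gcongr
        rw [mul_comm]
        exact sq_mul_dirichletEigenvalue_zero_sub_le hβ0 n
    _ = ENNReal.ofReal ((dirichletEigenvalue L 0 - β)⁻¹ * (π ^ 2 / 6)) := by
        rw [ENNReal.tsum_mul_left, ENNReal.tsum_ofReal_inv_succ_sq,
          ← ENNReal.ofReal_mul (by positivity)]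

/-- There is `c₁ > 0` depending only on `L` such that for all `β ∈ (0, μ₁)` and `x ∈ (0,L)`,
`∫₀^∞ e^{βt} p_D(t,x,x) dt ≤ c₁ (1/√β + 1/(μ₁ - β))`, where `μ₁ = π²/(2L²)`. -/
theorem dirichletKernel_exp_integral_upper (L : ℝ) (hL : 0 < L) :
    ∃ c₁ > (0:ℝ), ∀ β ∈ Set.Ioo (0:ℝ) (Real.pi^2 / (2*L^2)), ∀ x ∈ Set.Ioo (0:ℝ) L,
      ∫⁻ t in Set.Ioi (0:ℝ), ENNReal.ofReal (Real.exp (β * t) * dirichletKernel L t x x) ≤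
        ENNReal.ofReal (c₁ * (1 / Real.sqrt β + 1 / (Real.pi^2 / (2*L^2) - β))) := by
  refine ⟨2 / L * (π ^ 2 / 6), by positivity, ?_⟩
  rintro β ⟨hβ0, hβ⟩ x -
  have hμ : π ^ 2 / (2 * L ^ 2) = dirichletEigenvalue L 0 := by simp [dirichletEigenvalue]
  rw [hμ] at hβ ⊢
  calc _ ≤ ENNReal.ofReal (2 / L) * ∑' n : ℕ, ENNReal.ofReal (dirichletEigenvalue L n - β)⁻¹ :=
        lintegral_exp_mul_dirichletKernel_diag_le hL hβ x
    _ ≤ ENNReal.ofReal (2 / L) * ENNReal.ofReal ((dirichletEigenvalue L 0 - β)⁻¹ * (π ^ 2 / 6)) :=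
        by gcongr; exact tsum_ofReal_inv_dirichletEigenvalue_sub_le hβ0.le hβ
    _ = ENNReal.ofReal (2 / L * (π ^ 2 / 6) * (1 / (dirichletEigenvalue L 0 - β))) := by
        rw [← ENNReal.ofReal_mul (by positivity)]
        ring_nf
    _ ≤ _ := by
        gcongr
        exact le_add_of_nonneg_left (by positivity)
end

section
/- For every ε ∈ (0, L/2) there exist t₀ > 0 and c₁ > 0, depending only on ε and L, such that for every β > 0 and all x, y ∈ [ε, L−ε], ∫₀^∞ e^{−βt} p_D(t,x,y)² dt ≥ c₁·exp(−(β+2μ₁)t₀)/(β+2μ₁). -/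
open MeasureTheory Real

/-!
For large `t` the series is dominated by its first term. With `q = e^{-μ₁ t}`, the `n`-th term is
bounded by `q^{n²} ≤ q^n`, so everything after the first term sums to at most `q²/(1-q)`, while
for `x, y ∈ [ε, L-ε]` the first term is at least `q s²` with `s = sin(πε/L)`. Once `q ≤ s²/4`,
i.e. for `t > t₀ := log(4/s²)/μ₁`, this gives `p_D(t,x,y) ≥ (s²/L) e^{-μ₁ t}`, hence
`e^{-βt} p_D(t,x,y)² ≥ (s⁴/L²) e^{-(β+2μ₁)t}`, whose integral over `(t₀, ∞)` is the bound.
-/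

theorem sub_div_one_sub_le_tsum {a : ℕ → ℝ} {q : ℝ} (hq₀ : 0 ≤ q) (hq₁ : q < 1)
    (h : ∀ n, |a (n + 1)| ≤ q ^ (n + 2)) : a 0 - q ^ 2 / (1 - q) ≤ ∑' n, a n := by
  have hgeom : HasSum (fun n ↦ q ^ (n + 2)) (q ^ 2 / (1 - q)) := by
    simpa [div_eq_mul_inv, pow_add, mul_comm] using
      (hasSum_geometric_of_lt_one hq₀ hq₁).mul_left (q ^ 2)
  have htail : Summable (fun n ↦ a (n + 1)) := .of_norm_bounded hgeom.summable h
  rw [((summable_nat_add_iff 1).1 htail).tsum_eq_zero_add, sub_eq_add_neg, ← hgeom.tsum_eq,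
    ← tsum_neg]
  exact add_le_add_right
    (Summable.tsum_le_tsum (fun n ↦ neg_le_of_abs_le (h n)) hgeom.summable.neg htail) _

theorem Real.sin_le_sin_of_mem_Icc {a θ : ℝ} (ha : -(π / 2) ≤ a) (hθ : θ ∈ Set.Icc a (π - a)) :
    sin a ≤ sin θ := by
  rcases le_or_gt θ (π / 2) with h | h
  · exact sin_le_sin_of_le_of_le_pi_div_two ha h hθ.1
  · rw [← sin_pi_sub θ]
    exact sin_le_sin_of_le_of_le_pi_div_two ha (by linarith) (by linarith [hθ.2])

theorem ofReal_mul_exp_div_le_setLIntegral_Ioi {f : ℝ → ℝ} {a c A t₀ : ℝ} (hc : 0 ≤ c)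
    (hA : 0 < A) (ht₀ : a ≤ t₀) (hf : ∀ t, t₀ < t → c * exp (-A * t) ≤ f t) :
    ENNReal.ofReal (c * exp (-A * t₀) / A) ≤ ∫⁻ t in Set.Ioi a, ENNReal.ofReal (f t) := by
  have hint : ∫ t in Set.Ioi t₀, c * exp (-A * t) = c * exp (-A * t₀) / A := by
    rw [integral_const_mul, integral_exp_mul_Ioi (by linarith), neg_div_neg_eq, mul_div_assoc]
  calc ENNReal.ofReal (c * exp (-A * t₀) / A)
      = ∫⁻ t in Set.Ioi t₀, ENNReal.ofReal (c * exp (-A * t)) := by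
        rw [← hint, ofReal_integral_eq_lintegral_ofReal
          ((exp_neg_integrableOn_Ioi t₀ hA).const_mul c) (ae_of_all _ fun t ↦ by positivity)]
    _ ≤ ∫⁻ t in Set.Ioi t₀, ENNReal.ofReal (f t) :=
        setLIntegral_mono' measurableSet_Ioi fun t ht ↦ ENNReal.ofReal_le_ofReal (hf t ht)
    _ ≤ ∫⁻ t in Set.Ioi a, ENNReal.ofReal (f t) := lintegral_mono_set (Set.Ioi_subset_Ioi ht₀)

theorem exp_neg_sq_mul_eq_pow (L t : ℝ) (n : ℕ) :
    exp (-((n : ℝ) + 1) ^ 2 * π ^ 2 * t / (2 * L ^ 2)) =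
      exp (-(π ^ 2 / (2 * L ^ 2)) * t) ^ ((n + 1) ^ 2) := by
  rw [← exp_nat_mul]
  congr 1
  push_cast
  ring

noncomputable def dirichletKernelTerm (L t x y : ℝ) (n : ℕ) : ℝ :=
  exp (-((n : ℝ) + 1) ^ 2 * π ^ 2 * t / (2 * L ^ 2)) *
    sin (((n : ℝ) + 1) * π * x / L) * sin (((n : ℝ) + 1) * π * y / L)

theorem dirichletKernel_eq_tsum (L t x y : ℝ) :
    dirichletKernel L t x y = 2 / L * ∑' n, dirichletKernelTerm L t x y n := rfl

theorem dirichletKernelTerm_zero (L t x y : ℝ) :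
    dirichletKernelTerm L t x y 0 =
      exp (-(π ^ 2 / (2 * L ^ 2)) * t) * sin (π * x / L) * sin (π * y / L) := by
  rw [dirichletKernelTerm, exp_neg_sq_mul_eq_pow]
  simp

theorem abs_dirichletKernelTerm_le {L t : ℝ} (ht : 0 ≤ t) (x y : ℝ) (n : ℕ) :
    |dirichletKernelTerm L t x y n| ≤ exp (-(π ^ 2 / (2 * L ^ 2)) * t) ^ (n + 1) := by
  have hq : exp (-(π ^ 2 / (2 * L ^ 2)) * t) ≤ 1 :=
    exp_le_one_iff.2 (by rw [neg_mul, neg_nonpos]; positivity)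
  rw [dirichletKernelTerm, abs_mul, abs_mul, abs_exp, exp_neg_sq_mul_eq_pow]
  calc _ ≤ exp (-(π ^ 2 / (2 * L ^ 2)) * t) ^ ((n + 1) ^ 2) * 1 * 1 := by
        gcongr <;> exact abs_sin_le_one _
    _ ≤ _ := by
        simpa using pow_le_pow_of_le_one (exp_pos _).le hq (Nat.le_self_pow two_ne_zero (n + 1))

theorem sin_pi_mul_div_le_sin {L ε z : ℝ} (hL : 0 < L) (hε : 0 ≤ ε) (hz : z ∈ Set.Icc ε (L - ε)) :
    sin (π * ε / L) ≤ sin (π * z / L) := by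
  have : 0 ≤ π * ε / L := by positivity
  refine Real.sin_le_sin_of_mem_Icc (by linarith [pi_pos]) ⟨by gcongr; exact hz.1, ?_⟩
  rw [le_sub_iff_add_le, ← add_div, div_le_iff₀ hL]
  nlinarith [hz.2, pi_pos]

theorem sq_div_mul_exp_le_dirichletKernel {L t x y s : ℝ} (hL : 0 ≤ L) (ht : 0 ≤ t)
    (hs : 0 ≤ s) (hx : s ≤ sin (π * x / L)) (hy : s ≤ sin (π * y / L))
    (hq : exp (-(π ^ 2 / (2 * L ^ 2)) * t) ≤ s ^ 2 / 4) :
    s ^ 2 / L * exp (-(π ^ 2 / (2 * L ^ 2)) * t) ≤ dirichletKernel L t x y := by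
  set q := exp (-(π ^ 2 / (2 * L ^ 2)) * t)
  have hq₀ : 0 < q := exp_pos _
  have hs₁ : s ≤ 1 := hx.trans (sin_le_one _)
  have hq₁ : q ≤ 1 / 4 := by nlinarith
  have hsum := sub_div_one_sub_le_tsum hq₀.le (by linarith)
    fun n ↦ abs_dirichletKernelTerm_le (L := L) ht x y (n + 1)
  have hfirst : s ^ 2 * q ≤ dirichletKernelTerm L t x y 0 := by
    rw [dirichletKernelTerm_zero]
    nlinarith [mul_le_mul hx hy hs (hs.trans hx)]
  have htail : q ^ 2 / (1 - q) ≤ s ^ 2 / 2 * q := by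
    rw [div_le_iff₀ (by linarith)]
    nlinarith [mul_le_mul_of_nonneg_left hq hq₀.le,
      mul_nonneg (mul_nonneg hq₀.le (sq_nonneg s)) (by linarith : (0 : ℝ) ≤ 1 / 4 - q / 2)]
  calc s ^ 2 / L * q = 2 / L * (s ^ 2 / 2 * q) := by ring
    _ ≤ _ := by rw [dirichletKernel_eq_tsum]; gcongr; linarith

/-- For every `ε ∈ (0, L/2)` there are `t₀ > 0` and `c₁ > 0`, depending only on `ε` and `L`,
such that for every `β > 0` and `x, y ∈ [ε, L-ε]`,
`∫₀^∞ e^{-βt} p_D(t,x,y)² dt ≥ c₁ exp(-(β+2μ₁)t₀)/(β+2μ₁)`, where `μ₁ = π²/(2L²)`. -/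
theorem dirichletKernel_sq_laplace_lower (L : ℝ) (hL : 0 < L) (ε : ℝ)
    (hε : ε ∈ Set.Ioo (0:ℝ) (L/2)) :
    ∃ t₀ > (0:ℝ), ∃ c₁ > (0:ℝ), ∀ β > (0:ℝ),
      ∀ x ∈ Set.Icc ε (L - ε), ∀ y ∈ Set.Icc ε (L - ε),
      ENNReal.ofReal
          (c₁ * Real.exp (-(β + 2 * (Real.pi^2 / (2*L^2))) * t₀) /
            (β + 2 * (Real.pi^2 / (2*L^2))))
        ≤ ∫⁻ t in Set.Ioi (0:ℝ),
            ENNReal.ofReal (Real.exp (-β * t) * (dirichletKernel L t x y)^2) := by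
  obtain ⟨hε₀, hεL⟩ := hε
  set s := sin (π * ε / L)
  have hs₀ : 0 < s :=
    sin_pos_of_pos_of_lt_pi (by positivity) (by rw [div_lt_iff₀ hL]; nlinarith [pi_pos])
  have hlog : 0 < log (4 / s ^ 2) :=
    log_pos (by rw [lt_div_iff₀ (by positivity)]; nlinarith [sin_le_one (π * ε / L)])
  set μ := π ^ 2 / (2 * L ^ 2)
  have hμ : 0 < μ := by positivity
  refine ⟨log (4 / s ^ 2) / μ, by positivity, s ^ 4 / L ^ 2, by positivity, fun β hβ x hx y hy ↦
    ofReal_mul_exp_div_le_setLIntegral_Ioi (by positivity) (by positivity) (by positivity)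
      fun t ht ↦ ?_⟩
  have ht₀ : 0 < t := lt_trans (by positivity) ht
  have hq : exp (-μ * t) ≤ s ^ 2 / 4 :=
    calc exp (-μ * t) ≤ exp (-log (4 / s ^ 2)) :=
          exp_le_exp.2 (by rw [div_lt_iff₀' hμ] at ht; linarith)
      _ = s ^ 2 / 4 := by rw [exp_neg, exp_log (by positivity), inv_div]
  have hp := sq_div_mul_exp_le_dirichletKernel hL.le ht₀.le hs₀.le
    (sin_pi_mul_div_le_sin hL hε₀.le hx) (sin_pi_mul_div_le_sin hL hε₀.le hy) hq
  calc s ^ 4 / L ^ 2 * exp (-(β + 2 * μ) * t)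
      = exp (-β * t) * (s ^ 2 / L * exp (-μ * t)) ^ 2 := by
        rw [show -(β + 2 * μ) * t = -β * t + -μ * t + -μ * t by ring, exp_add, exp_add]
        ring
    _ ≤ exp (-β * t) * dirichletKernel L t x y ^ 2 := by gcongr
end
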